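/- In the Subbotin setting with parameter ζ > 1, for any δ ≥ 0, any integer ρ with 1 ≤ ρ ≤ log(1/ω_{δ,n/s_n})/2, and any b ∈ ℝ, one has p_n(b,ρ) ≥ F̄(b+δ) − ω_{δ,n/s_n}^{1/10}. -/

import Mathlib

open MeasureTheory ProbabilityTheory Filter
open scoped Classical ENNReal

noncomputable section

/-- Unnormalized Subbotin density `e^{-|x|^ζ/ζ}`. -/
def sDensity (ζ : ℝ) (x : ℝ) : ℝ := Real.exp (-|x| ^ ζ / ζ)

/-- Normalizing constant `L_ζ = ∫ e^{-|x|^ζ/ζ} dx`. -/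
def Lz (ζ : ℝ) : ℝ := ∫ x : ℝ, sDensity ζ x

/-- Subbotin density `f(x) = L_ζ⁻¹ e^{-|x|^ζ/ζ}`. -/
def sf (ζ : ℝ) (x : ℝ) : ℝ := (Lz ζ)⁻¹ * sDensity ζ x

/-- Subbotin noise distribution: the measure with density `f` w.r.t. Lebesgue measure. -/
def noiseMeasure (ζ : ℝ) : Measure ℝ :=
  MeasureTheory.volume.withDensity fun x => ENNReal.ofReal (sf ζ x)

/-- Subbotin upper tail function `F̄(x) = ∫_x^∞ f(u) du`. -/
def Fbar (ζ : ℝ) (x : ℝ) : ℝ := ∫ u in Set.Ioi x, sf ζ u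

/-- Law of the observation `X = θ + ε` with `ε_i` i.i.d. Subbotin(ζ) noise. -/
def obsLaw {n : ℕ} (ζ : ℝ) (θ : Fin n → ℝ) : Measure (Fin n → ℝ) :=
  Measure.pi fun i =>
    MeasureTheory.volume.withDensity fun x => ENNReal.ofReal (sf ζ (x - θ i))

/-- Number of rejections of the decision vector `v`. -/
def numRej {n : ℕ} (v : Fin n → Bool) : ℕ :=
  (Finset.univ.filter fun i => v i = true).card

/-- Support of `θ`. -/
def supp {n : ℕ} (θ : Fin n → ℝ) : Finset (Fin n) :=
  Finset.univ.filter fun i => θ i ≠ 0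

/-- False discovery proportion. -/
def FDP {n : ℕ} (θ : Fin n → ℝ) (v : Fin n → Bool) : ℝ :=
  ((Finset.univ.filter fun i => θ i = 0 ∧ v i = true).card : ℝ) / max 1 (numRej v : ℝ)

/-- False negative proportion. -/
def FNP {n : ℕ} (θ : Fin n → ℝ) (v : Fin n → Bool) : ℝ :=
  ((Finset.univ.filter fun i => θ i ≠ 0 ∧ v i = false).card : ℝ) / max 1 ((supp θ).card : ℝ)

/-- False discovery rate. -/
def FDR {n : ℕ} (ζ : ℝ) (θ : Fin n → ℝ) (φ : (Fin n → ℝ) → Fin n → Bool) : ℝ :=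
  ∫ x, FDP θ (φ x) ∂(obsLaw ζ θ)

/-- False negative rate. -/
def FNR {n : ℕ} (ζ : ℝ) (θ : Fin n → ℝ) (φ : (Fin n → ℝ) → Fin n → Bool) : ℝ :=
  ∫ x, FNP θ (φ x) ∂(obsLaw ζ θ)

/-- Combined multiple testing risk `𝔎 = FDR + FNR`. -/
def mtRisk {n : ℕ} (ζ : ℝ) (θ : Fin n → ℝ) (φ : (Fin n → ℝ) → Fin n → Bool) : ℝ :=
  FDR ζ θ φ + FNR ζ θ φ

/-- Oracle threshold `a* = (ζ log(n/s_n))^{1/ζ}`. -/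
def astar (ζ : ℝ) (n s : ℕ) : ℝ := (ζ * Real.log ((n : ℝ) / (s : ℝ))) ^ (1 / ζ)

/-- The class `Θ_𝐛`: sparse vectors with `s` coordinates (at distinct positions) whose
absolute values are at least `a* + b_j`, `j = 1, …, s`. -/
def ThetaMult (ζ : ℝ) (n s : ℕ) (b : Fin s → ℝ) : Set (Fin n → ℝ) :=
  {θ | (supp θ).card ≤ s ∧
    ∃ ι : Fin s → Fin n, Function.Injective ι ∧
      ∀ j, astar ζ n s + b j ≤ |θ (ι j)|}

/-- `Λ_n(𝐛) = s⁻¹ Σ_j F̄(b_j)`. -/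
def Lambda (ζ : ℝ) (s : ℕ) (b : Fin s → ℝ) : ℝ := (∑ j, Fbar ζ (b j)) / (s : ℝ)

/-- `p_n(b,ρ) = P(#{2 ≤ i ≤ ⌊n/s⌋ : ε_i > a_b + ε_1} ≥ ρ)` for i.i.d. Subbotin noise,
realised on the product space `ℝ × (Fin (⌊n/s⌋ - 1) → ℝ)` where the first coordinate
plays the role of `ε_1`. -/
def pn (ζ : ℝ) (n s : ℕ) (b : ℝ) (ρ : ℕ) : ℝ :=
  (((noiseMeasure ζ).prod (Measure.pi fun _ : Fin (n / s - 1) => noiseMeasure ζ))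
    {p | ρ ≤ (Finset.univ.filter fun i => astar ζ n s + b + p.1 < p.2 i).card}).toReal

/-- `𝔉̄_n(𝐛,ρ) = s⁻¹ Σ_j p_n(b_j,ρ)`. -/
def Fcal (ζ : ℝ) (n s : ℕ) (b : Fin s → ℝ) (ρ : ℕ) : ℝ :=
  (∑ j, pn ζ n s (b j) ρ) / (s : ℝ)

/-- `ω_{δ,q} = exp(−(⌊q⌋−1) F̄((ζ log q)^{1/ζ} − δ))`. -/
def omegaDQ (ζ δ q : ℝ) : ℝ :=
  Real.exp (-((⌊q⌋ : ℝ) - 1) * Fbar ζ ((ζ * Real.log q) ^ (1 / ζ) - δ))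


/-! On the event `ε_1 < -(b + δ)`, of probability `F̄(b + δ)` by symmetry of the noise, it
suffices that at least `ρ` of the other `m = ⌊n/s⌋ - 1` noises exceed `a* - δ`. These are
independent successes of probability `p = F̄(a* - δ)`, and `ω_{δ,n/s} = e^{-mp}`. Markov's
inequality for `2^{-#successes}` (a Chernoff bound) shows that fewer than `ρ ≤ mp/2` successes
occur with probability at most `e^{-mp/10} = ω^{1/10}`, and
`F̄(b + δ) (1 - ω^{1/10}) ≥ F̄(b + δ) - ω^{1/10}`. -/

section Chernoff

open Finset

variable {ι α : Type*} [Fintype ι] [MeasurableSpace α] (μ : Measure α) [IsProbabilityMeasure μ]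
  {A : Set α}

lemma integral_ite_half_one (hA : MeasurableSet A) :
    ∫ x, (if x ∈ A then (1 / 2 : ℝ) else 1) ∂μ = 1 - μ.real A / 2 := by
  have hg : (fun x => if x ∈ A then (1 / 2 : ℝ) else 1) = fun x => 1 - 2⁻¹ * A.indicator 1 x := by
    funext x
    by_cases hx : x ∈ A
    · simp [hx]; norm_num
    · simp [hx]
  rw [hg, integral_sub (integrable_const _) ((integrable_const _).indicator hA |>.const_mul _),
    integral_const_mul, integral_indicator_one hA]
  simp [div_eq_inv_mul]

lemma measureReal_pi_card_le_le (hA : MeasurableSet A) (k : ℕ) :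
    (Measure.pi fun _ : ι => μ).real {y | #{i | y i ∈ A} ≤ k} ≤
      2 ^ k * (1 - μ.real A / 2) ^ Fintype.card ι := by
  set g : α → ℝ := fun x => if x ∈ A then 1 / 2 else 1
  have hg_int : Integrable g μ :=
    Integrable.of_bound (Measurable.ite hA measurable_const measurable_const).aestronglyMeasurable 1
      (Eventually.of_forall fun x => by by_cases hx : x ∈ A <;> norm_num [g, hx])
  have hg_nonneg : ∀ x, 0 ≤ g x := fun x => by dsimp only [g]; split_ifs <;> norm_num
  have hprod : ∀ y : ι → α, ∏ i, g (y i) = (1 / 2) ^ #{i | y i ∈ A} := by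
    intro y
    simp only [g, Finset.prod_ite, Finset.prod_const, one_pow, mul_one]
  have hsub : {y : ι → α | #{i | y i ∈ A} ≤ k} ⊆ {y | (1 / 2 : ℝ) ^ k ≤ ∏ i, g (y i)} := by
    intro y hy
    rw [Set.mem_ofPred_eq, hprod y]
    exact pow_le_pow_of_le_one (by norm_num) (by norm_num) hy
  have hmarkov := mul_meas_ge_le_integral_of_nonneg
    (Eventually.of_forall fun (y : ι → α) => Finset.prod_nonneg fun i _ => hg_nonneg (y i))
    (Integrable.fintype_prod (μ := fun _ : ι => μ) fun _ => hg_int) ((1 / 2 : ℝ) ^ k)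
  rw [integral_fintype_prod_eq_pow, integral_ite_half_one μ hA] at hmarkov
  calc _ ≤ (Measure.pi fun _ : ι => μ).real {y | (1 / 2 : ℝ) ^ k ≤ ∏ i, g (y i)} :=
        measureReal_mono hsub
    _ = 2 ^ k * ((1 / 2) ^ k * (Measure.pi fun _ : ι => μ).real
          {y | (1 / 2 : ℝ) ^ k ≤ ∏ i, g (y i)}) := by
        rw [← mul_assoc, ← mul_pow]; norm_num
    _ ≤ _ := by gcongr

/-- `2^ρ (1 - p/2)^m ≤ e^{mp (log 2 - 1)/2}` and `(1 - log 2)/2 > 1/10`. -/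
lemma two_pow_mul_one_sub_half_pow_le_exp {m ρ : ℕ} {p : ℝ} (hp : p ≤ 2)
    (hρ : (ρ : ℝ) ≤ m * p / 2) : 2 ^ ρ * (1 - p / 2) ^ m ≤ Real.exp (-(m * p) / 10) := by
  have hmp : 0 ≤ (m : ℝ) * p := by linarith [Nat.cast_nonneg (α := ℝ) ρ]
  have hlog2 : Real.log 2 < 4 / 5 := Real.log_two_lt_d9.trans (by norm_num)
  have hpow2 : (2 : ℝ) ^ ρ ≤ Real.exp (m * p / 2 * Real.log 2) := by
    rw [← Real.rpow_natCast, Real.rpow_def_of_pos two_pos, mul_comm]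
    gcongr
  have hpow : (1 - p / 2) ^ m ≤ Real.exp (-(m * p / 2)) := by
    calc (1 - p / 2) ^ m ≤ Real.exp (-(p / 2)) ^ m := by
          gcongr
          · linarith
          · linarith [Real.add_one_le_exp (-(p / 2))]
      _ = Real.exp (-(m * p / 2)) := by rw [← Real.exp_nat_mul]; ring_nf
  calc 2 ^ ρ * (1 - p / 2) ^ m ≤ Real.exp (m * p / 2 * Real.log 2) * Real.exp (-(m * p / 2)) := by
        gcongr
        exact pow_nonneg (by linarith) m
    _ ≤ Real.exp (-(m * p) / 10) := by
        rw [← Real.exp_add]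
        gcongr
        nlinarith

lemma one_sub_exp_le_measureReal_pi_le_card (hA : MeasurableSet A) {ρ : ℕ}
    (hρ : (ρ : ℝ) ≤ Fintype.card ι * μ.real A / 2) :
    1 - Real.exp (-(Fintype.card ι * μ.real A) / 10) ≤
      (Measure.pi fun _ : ι => μ).real {y | ρ ≤ #{i | y i ∈ A}} := by
  set ν := Measure.pi fun _ : ι => μ
  have hfew : ν.real {y | #{i | y i ∈ A} < ρ} ≤ Real.exp (-(Fintype.card ι * μ.real A) / 10) :=
    calc ν.real {y | #{i | y i ∈ A} < ρ} ≤ ν.real {y | #{i | y i ∈ A} ≤ ρ} :=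
          measureReal_mono fun _ hy => le_of_lt (α := ℕ) hy
      _ ≤ 2 ^ ρ * (1 - μ.real A / 2) ^ Fintype.card ι := measureReal_pi_card_le_le μ hA ρ
      _ ≤ _ := two_pow_mul_one_sub_half_pow_le_exp
          (by linarith [measureReal_le_one (μ := μ) (s := A)]) hρ
  have hcover := measureReal_union_le (μ := ν) {y | ρ ≤ #{i | y i ∈ A}} {y | #{i | y i ∈ A} < ρ}
  have hunion : {y : ι → α | ρ ≤ #{i | y i ∈ A}} ∪ {y | #{i | y i ∈ A} < ρ} = Set.univ :=
    Set.eq_univ_of_forall fun y => le_or_gt ρ #{i | y i ∈ A}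
  rw [hunion, probReal_univ] at hcover
  linarith

end Chernoff

section Subbotin

variable {ζ : ℝ}

lemma sDensity_neg (ζ x : ℝ) : sDensity ζ (-x) = sDensity ζ x := by
  simp only [sDensity, abs_neg]

lemma integrable_sDensity (hζ : 0 < ζ) : Integrable (sDensity ζ) := by
  have hIoi : IntegrableOn (sDensity ζ) (Set.Ioi 0) := by
    refine (integrableOn_rpow_mul_exp_neg_mul_rpow (s := 0) (by norm_num) hζ
      (inv_pos.2 hζ)).congr_fun (fun x hx => ?_) measurableSet_Ioi
    simp [sDensity, abs_of_pos (Set.mem_Ioi.1 hx), div_eq_inv_mul]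
  have hIio : IntegrableOn (sDensity ζ) (Set.Iio 0) := by
    rw [← (Measure.measurePreserving_neg (volume : Measure ℝ)).integrableOn_comp_preimage
      (Homeomorph.neg ℝ).measurableEmbedding]
    simpa [Function.comp_def, sDensity_neg] using hIoi
  rw [← integrableOn_univ, ← Set.Iio_union_Ici (a := (0 : ℝ)), integrableOn_union,
    integrableOn_Ici_iff_integrableOn_Ioi]
  exact ⟨hIio, hIoi⟩

lemma integrable_sf (hζ : 0 < ζ) : Integrable (sf ζ) :=
  (integrable_sDensity hζ).const_mul _

lemma sf_nonneg (ζ x : ℝ) : 0 ≤ sf ζ x :=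
  mul_nonneg (inv_nonneg.2 (integral_nonneg fun _ => (Real.exp_pos _).le)) (Real.exp_pos _).le

lemma integral_sf (hζ : 0 < ζ) : ∫ x, sf ζ x = 1 := by
  have hLz : 0 < Lz ζ := by
    rw [Lz, integral_pos_iff_support_of_nonneg (f := sDensity ζ) (fun _ => (Real.exp_pos _).le)
      (integrable_sDensity hζ)]
    simp [Function.support, sDensity, (Real.exp_pos _).ne']
  rw [show (fun x => sf ζ x) = fun x => (Lz ζ)⁻¹ * sDensity ζ x from rfl, integral_const_mul,
    ← Lz, inv_mul_cancel₀ hLz.ne']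

lemma noiseMeasure_real_apply (hζ : 0 < ζ) {s : Set ℝ} (hs : MeasurableSet s) :
    (noiseMeasure ζ).real s = ∫ x in s, sf ζ x := by
  rw [measureReal_def, noiseMeasure, withDensity_apply _ hs,
    ← ofReal_integral_eq_lintegral_ofReal (integrable_sf hζ).integrableOn
      (Eventually.of_forall (sf_nonneg ζ)),
    ENNReal.toReal_ofReal (setIntegral_nonneg hs fun x _ => sf_nonneg ζ x)]

lemma isProbabilityMeasure_noiseMeasure (hζ : 0 < ζ) : IsProbabilityMeasure (noiseMeasure ζ) := by
  refine ⟨(ENNReal.toReal_eq_one_iff _).1 ?_⟩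
  rw [← measureReal_def, noiseMeasure_real_apply hζ MeasurableSet.univ, setIntegral_univ,
    integral_sf hζ]

lemma noiseMeasure_real_Ioi (hζ : 0 < ζ) (c : ℝ) : (noiseMeasure ζ).real (Set.Ioi c) = Fbar ζ c :=
  noiseMeasure_real_apply hζ measurableSet_Ioi

lemma noiseMeasure_real_Iio_neg (hζ : 0 < ζ) (c : ℝ) :
    (noiseMeasure ζ).real (Set.Iio (-c)) = Fbar ζ c := by
  rw [noiseMeasure_real_apply hζ measurableSet_Iio, ← integral_Iic_eq_integral_Iio,
    ← integral_comp_neg_Ioi, Fbar]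
  simp only [sf, sDensity_neg]

end Subbotin

open Finset in
/-- On `ε_1 < -(b + δ)`, every `ε_i > a* - δ` also exceeds `a* + b + ε_1`. -/
lemma Fbar_mul_measureReal_le_pn {ζ : ℝ} (hζ : 0 < ζ) (n s : ℕ) (b δ : ℝ) (ρ : ℕ) :
    Fbar ζ (b + δ) * (Measure.pi fun _ : Fin (n / s - 1) => noiseMeasure ζ).real
      {y | ρ ≤ #{i | y i ∈ Set.Ioi (astar ζ n s - δ)}} ≤ pn ζ n s b ρ := by
  have := isProbabilityMeasure_noiseMeasure hζ
  rw [← noiseMeasure_real_Iio_neg hζ, ← measureReal_prod_prod]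
  refine measureReal_mono ?_
  rintro ⟨x, y⟩ ⟨hx, hy⟩
  refine hy.trans (card_le_card fun i hi => ?_)
  simp only [mem_filter, Set.mem_Ioi, Set.mem_Iio] at hx hi ⊢
  exact ⟨hi.1, by linarith [hi.2]⟩

lemma omegaDQ_natCast_div (ζ δ : ℝ) {n s : ℕ} (hq : 1 ≤ (n : ℝ) / s) :
    omegaDQ ζ δ ((n : ℝ) / s) =
      Real.exp (-(((n / s - 1 : ℕ) : ℝ) * Fbar ζ (astar ζ n s - δ))) := by
  have hfloor : ⌊(n : ℝ) / s⌋ = ((n / s : ℕ) : ℤ) := by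
    rw [← Int.natCast_floor_eq_floor (by positivity), Nat.floor_div_eq_div]
  have hdiv : 1 ≤ n / s := by
    rw [← Nat.floor_div_eq_div (K := ℝ)]
    exact Nat.le_floor (by exact_mod_cast hq)
  rw [omegaDQ, hfloor, Int.cast_natCast, astar, Nat.cast_sub hdiv, Nat.cast_one, neg_mul]

theorem statement_16_general (ζ : ℝ) (hζ : 1 < ζ) (n s : ℕ)
    (hq : 2 ≤ (n : ℝ) / (s : ℝ))
    (δ : ℝ) (ρ : ℕ)
    (hρ_le : (ρ : ℝ) ≤ Real.log (1 / omegaDQ ζ δ ((n : ℝ) / (s : ℝ))) / 2)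
    (b : ℝ) :
    Fbar ζ (b + δ) - omegaDQ ζ δ ((n : ℝ) / (s : ℝ)) ^ ((1 : ℝ) / 10) ≤
      pn ζ n s b ρ := by
  have hζ0 : 0 < ζ := zero_lt_one.trans hζ
  have := isProbabilityMeasure_noiseMeasure hζ0
  have hω := omegaDQ_natCast_div ζ δ (one_le_two.trans hq)
  set m := n / s - 1
  set p := Fbar ζ (astar ζ n s - δ)
  have hp : (noiseMeasure ζ).real (Set.Ioi (astar ζ n s - δ)) = p := noiseMeasure_real_Ioi hζ0 _
  have hρm : (ρ : ℝ) ≤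
      Fintype.card (Fin m) * (noiseMeasure ζ).real (Set.Ioi (astar ζ n s - δ)) / 2 := by
    rw [Fintype.card_fin, hp]
    rwa [hω, one_div, Real.log_inv, Real.log_exp, neg_neg] at hρ_le
  have hmany := one_sub_exp_le_measureReal_pi_le_card (noiseMeasure ζ) measurableSet_Ioi hρm
  rw [Fintype.card_fin, hp] at hmany
  have hpn := Fbar_mul_measureReal_le_pn hζ0 n s b δ ρ
  have hF0 := noiseMeasure_real_Ioi hζ0 (b + δ) ▸ measureReal_nonneg
  have hF1 := noiseMeasure_real_Ioi hζ0 (b + δ) ▸ measureReal_le_one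
  rw [hω, ← Real.exp_mul, show -(m * p) * (1 / 10) = -(m * p) / 10 by ring]
  calc Fbar ζ (b + δ) - Real.exp (-(m * p) / 10)
      ≤ Fbar ζ (b + δ) * (1 - Real.exp (-(m * p) / 10)) := by
        nlinarith [Real.exp_pos (-(m * p) / 10)]
    _ ≤ _ := mul_le_mul_of_nonneg_left hmany hF0
    _ ≤ pn ζ n s b ρ := hpn

theorem statement_16 (ζ : ℝ) (hζ : 1 < ζ) (n s : ℕ)
    (hs : 1 ≤ s) (hsn : s ≤ n) (hq : 2 ≤ (n : ℝ) / (s : ℝ))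
    (δ : ℝ) (hδ : 0 ≤ δ) (ρ : ℕ) (hρ : 1 ≤ ρ)
    (hρ_le : (ρ : ℝ) ≤ Real.log (1 / omegaDQ ζ δ ((n : ℝ) / (s : ℝ))) / 2)
    (b : ℝ) :
    Fbar ζ (b + δ) - omegaDQ ζ δ ((n : ℝ) / (s : ℝ)) ^ ((1 : ℝ) / 10) ≤
      pn ζ n s b ρ :=
  statement_16_general ζ hζ n s hq δ ρ hρ_le b
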